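/- arXiv:1102.4744 — 2 statements merged into one kernel-verified Lean document; each statement's English description precedes it below -/
import Mathlib

section
/- Let λ > 0, set Ĵ_n = J_{n+(2+λ)/λ}(2/λ) for n ∈ ℕ, and assume D = (2λ²+8λ+5)·Ĵ_1 − (λ+3)·Ĵ_2 is nonzero; set c = 2/D. Define π_0 = 1 − c·Ĵ_0 and π_n = c·(Ĵ_{n−1} − Ĵ_n) for n ≥ 1. Then: (i) for every n ∈ ℕ, ∑_{k=0}^n π_k = 1 − c·Ĵ_n; (ii) π is summable with ∑_{k=0}^∞ π_k = 1; and (iii) for every column j ∈ ℕ, the series ∑_{i=0}^∞ π_i·Q(i,j) converges absolutely to 0, i.e. π is a stationary vector of the front process on the ladder. -/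
/-!
The recurrence `J_{ν-1}(z) + J_{ν+1}(z) = (2ν/z) J_ν(z)`, read off termwise from the series, gives
`Ĵ_n + Ĵ_{n+2} = ((n+2)λ + 2) Ĵ_{n+1}`, and the bound `|J_ν(z)| ≤ (z/2)^ν e^{(z/2)²} / Γ(ν+1)`
together with `Γ(ν+1+n) ≥ n! Γ(ν+1)` makes `Ĵ` summable. The vector `π` telescopes, so its partial
sums are `1 - c Ĵ_n`, its total mass is `1` and its tails are `∑_{i>n} π_i = c Ĵ_n`. Column `j` of
`Q` vanishes in the rows `i ≤ j - 2` and equals `λ` from row `j + 2` on, so `∑_i π_i Q(i,j)` is a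
three-term combination of the `π_i` plus `λ c Ĵ_{j+1}`: for `j ≥ 2` it vanishes by two instances of
the recurrence, for `j ≤ 1` by the recurrence at `n = 0` and the normalization `c D = 2`.
-/


/-- Bessel function of the first kind of real order `ν`, for real `z > 0`,
defined by the series `∑ (−1)^m / (m! Γ(m+ν+1)) (z/2)^(2m+ν)` (real powers). -/
noncomputable def besselJ (ν z : ℝ) : ℝ :=
  ∑' m : ℕ, ((-1 : ℝ) ^ m / (m.factorial * Real.Gamma ((m : ℝ) + ν + 1)))
      * (z / 2) ^ (2 * (m : ℝ) + ν)

/-- Intensity matrix of the front process on the ladder with vertical intensity `l`. -/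
noncomputable def ladderQ (l : ℝ) (i j : ℕ) : ℝ :=
  if i = 0 then (if j = 0 then -2 else if j = 1 then 2 else 0)
  else if j + 2 ≤ i then l
  else if j + 1 = i then 1 + l
  else if j = i then -(2 + (i : ℝ) * l)
  else if j = i + 1 then 1
  else 0

/-- `Ĵ_n = J_{n+(2+λ)/λ}(2/λ)` for `n ∈ ℕ`. -/
noncomputable def JhatL (l : ℝ) (n : ℕ) : ℝ := besselJ ((n : ℝ) + (2 + l) / l) (2 / l)

open Finset
open scoped Nat

section Bessel

open Real

lemma factorial_mul_Gamma_le_Gamma_add_nat {x : ℝ} (hx : 1 ≤ x) (n : ℕ) :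
    n ! * Gamma x ≤ Gamma (x + n) := by
  induction n with
  | zero => simp
  | succ n ih =>
    have hxn : 0 < x + n := by positivity
    rw [Nat.cast_succ, ← add_assoc, Gamma_add_one hxn.ne', Nat.factorial_succ, Nat.cast_mul,
      mul_assoc]
    exact mul_le_mul (by push_cast; linarith) ih (by positivity) hxn.le

noncomputable def besselJTerm (ν z : ℝ) (m : ℕ) : ℝ :=
  ((-1 : ℝ) ^ m / (m ! * Gamma ((m : ℝ) + ν + 1))) * (z / 2) ^ (2 * (m : ℝ) + ν)

lemma besselJ_eq_tsum (ν z : ℝ) : besselJ ν z = ∑' m, besselJTerm ν z m := rfl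

lemma abs_besselJTerm_le {ν z : ℝ} (hν : 0 ≤ ν) (hz : 0 < z) (m : ℕ) :
    |besselJTerm ν z m| ≤ (z / 2) ^ ν / Gamma (ν + 1) * (((z / 2) ^ 2) ^ m / m !) := by
  have hz2 : 0 < z / 2 := by positivity
  have hΓ : 0 < Gamma (ν + 1) := Gamma_pos_of_pos (by linarith)
  have hΓm : Gamma (ν + 1) ≤ Gamma ((m : ℝ) + ν + 1) := by
    have h := factorial_mul_Gamma_le_Gamma_add_nat (x := ν + 1) (by linarith) m
    rw [show ν + 1 + (m : ℝ) = m + ν + 1 by ring] at h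
    exact le_trans (le_mul_of_one_le_left hΓ.le (by exact_mod_cast m.factorial_pos)) h
  have hpow : (z / 2) ^ (2 * (m : ℝ) + ν) = (z / 2) ^ ν * ((z / 2) ^ 2) ^ m := by
    rw [rpow_add hz2, ← pow_mul, ← rpow_natCast, mul_comm]
    push_cast; ring_nf
  rw [besselJTerm, abs_mul, abs_div, abs_pow, abs_neg, abs_one, one_pow, hpow,
    abs_of_pos (by positivity), abs_of_pos (by positivity), one_div_mul_eq_div,
    div_mul_div_comm, mul_comm (Gamma (ν + 1))]
  gcongr

lemma summable_abs_besselJTerm {ν z : ℝ} (hν : 0 ≤ ν) (hz : 0 < z) :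
    Summable fun m => |besselJTerm ν z m| :=
  .of_nonneg_of_le (fun _ => abs_nonneg _) (abs_besselJTerm_le hν hz)
    ((summable_pow_div_factorial _).mul_left _)

lemma abs_besselJ_le {ν z : ℝ} (hν : 0 ≤ ν) (hz : 0 < z) :
    |besselJ ν z| ≤ (z / 2) ^ ν / Gamma (ν + 1) * exp ((z / 2) ^ 2) := by
  have hexp : HasSum (fun m : ℕ => (z / 2) ^ ν / Gamma (ν + 1) * (((z / 2) ^ 2) ^ m / m !))
      ((z / 2) ^ ν / Gamma (ν + 1) * exp ((z / 2) ^ 2)) := by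
    have h := (NormedSpace.expSeries_div_hasSum_exp ((z / 2) ^ 2 : ℝ)).mul_left
      ((z / 2) ^ ν / Gamma (ν + 1))
    rwa [← exp_eq_exp_ℝ] at h
  have hsum : Summable fun m => ‖besselJTerm ν z m‖ := by
    simpa only [norm_eq_abs] using summable_abs_besselJTerm hν hz
  rw [← norm_eq_abs, besselJ_eq_tsum]
  calc ‖∑' m, besselJTerm ν z m‖ ≤ ∑' m, ‖besselJTerm ν z m‖ := norm_tsum_le_tsum_norm hsum
    _ ≤ ∑' m : ℕ, (z / 2) ^ ν / Gamma (ν + 1) * (((z / 2) ^ 2) ^ m / m !) :=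
        Summable.tsum_le_tsum (abs_besselJTerm_le hν hz) hsum hexp.summable
    _ = _ := hexp.tsum_eq

lemma summable_besselJ_nat_add {ν z : ℝ} (hν : 0 ≤ ν) (hz : 0 < z) :
    Summable fun n : ℕ => besselJ (n + ν) z := by
  have hz2 : 0 < z / 2 := by positivity
  set C := (z / 2) ^ ν / Gamma (ν + 1) * exp ((z / 2) ^ 2)
  refine .of_norm_bounded ((summable_pow_div_factorial (z / 2)).mul_left C) fun n => ?_
  have hΓn : n ! * Gamma (ν + 1) ≤ Gamma (n + ν + 1) := by
    convert factorial_mul_Gamma_le_Gamma_add_nat (x := ν + 1) (by linarith) n using 2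
    ring
  calc ‖besselJ (n + ν) z‖
      ≤ (z / 2) ^ ((n : ℝ) + ν) / Gamma (n + ν + 1) * exp ((z / 2) ^ 2) :=
        abs_besselJ_le (by positivity) hz
    _ ≤ (z / 2) ^ n * (z / 2) ^ ν / (n ! * Gamma (ν + 1)) * exp ((z / 2) ^ 2) := by
        rw [rpow_add hz2, rpow_natCast]
        gcongr
    _ = C * ((z / 2) ^ n / n !) := by
        simp only [C]
        field_simp

lemma besselJTerm_zero_eq {ν z : ℝ} (hν : 0 < ν) (hz : z ≠ 0) :
    2 * ν / z * besselJTerm ν z 0 = besselJTerm (ν - 1) z 0 := by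
  obtain ⟨μ, rfl⟩ : ∃ μ, ν = μ + 1 := ⟨ν - 1, by ring⟩
  have hz2 : z / 2 ≠ 0 := by positivity
  simp only [besselJTerm, pow_zero, Nat.factorial_zero, Nat.cast_one, Nat.cast_zero, mul_zero,
    zero_add, one_mul, add_sub_cancel_right]
  rw [rpow_add_one hz2, Gamma_add_one hν.ne']
  field_simp

lemma besselJTerm_succ_eq {ν z : ℝ} (hν : 0 < ν) (hz : z ≠ 0) (m : ℕ) :
    2 * ν / z * besselJTerm ν z (m + 1) =
      besselJTerm (ν - 1) z (m + 1) + besselJTerm (ν + 1) z m := by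
  have hz2 : z / 2 ≠ 0 := by positivity
  have hpos : (0 : ℝ) < m + ν + 1 := by positivity
  simp only [besselJTerm]
  rw [show 2 * ((m + 1 : ℕ) : ℝ) + ν = 2 * (m : ℝ) + ν + 1 + 1 by push_cast; ring,
    rpow_add_one hz2,
    show 2 * ((m + 1 : ℕ) : ℝ) + (ν - 1) = 2 * (m : ℝ) + ν + 1 by push_cast; ring,
    show 2 * (m : ℝ) + (ν + 1) = 2 * m + ν + 1 by ring,
    show ((m + 1 : ℕ) : ℝ) + ν + 1 = m + ν + 1 + 1 by push_cast; ring,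
    show ((m + 1 : ℕ) : ℝ) + (ν - 1) + 1 = m + ν + 1 by push_cast; ring,
    show (m : ℝ) + (ν + 1) + 1 = m + ν + 1 + 1 by ring,
    Gamma_add_one hpos.ne', Nat.factorial_succ, pow_succ]
  push_cast
  field_simp
  ring

lemma besselJ_sub_one_add_besselJ_add_one {ν z : ℝ} (hν : 1 ≤ ν) (hz : 0 < z) :
    besselJ (ν - 1) z + besselJ (ν + 1) z = 2 * ν / z * besselJ ν z := by
  have hsum : ∀ {μ}, 0 ≤ μ → Summable (besselJTerm μ z) := fun hμ =>
    (summable_abs_besselJTerm hμ hz).of_abs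
  have hν0 : 0 < ν := by linarith
  have hlow := hsum (μ := ν - 1) (by linarith)
  rw [besselJ_eq_tsum, besselJ_eq_tsum, besselJ_eq_tsum, ← tsum_mul_left,
    hlow.tsum_eq_zero_add, ((hsum (by linarith)).mul_left _).tsum_eq_zero_add,
    besselJTerm_zero_eq hν0 hz.ne', add_assoc, ← ((summable_nat_add_iff 1).2 hlow).tsum_add
    (hsum (by linarith))]
  simp only [besselJTerm_succ_eq hν0 hz.ne']

end Bessel

lemma summable_JhatL {l : ℝ} (hl : 0 < l) : Summable (JhatL l) :=
  summable_besselJ_nat_add (by positivity) (by positivity)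

lemma JhatL_add_JhatL_add_two {l : ℝ} (hl : 0 < l) (n : ℕ) :
    JhatL l n + JhatL l (n + 2) = ((n + 2) * l + 2) * JhatL l (n + 1) := by
  set ν := (2 + l) / l
  have h := besselJ_sub_one_add_besselJ_add_one (ν := (n + 1 : ℕ) + ν) (z := 2 / l)
    (by push_cast; linarith [(by positivity : 0 ≤ (n : ℝ) + ν)]) (by positivity)
  have hcoeff : 2 * ((n + 1 : ℕ) + ν) / (2 / l) = (n + 2) * l + 2 := by
    simp only [ν]; push_cast; field_simp; ring
  rw [show ((n + 1 : ℕ) : ℝ) + ν - 1 = n + ν by push_cast; ring,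
    show ((n + 1 : ℕ) : ℝ) + ν + 1 = (n + 2 : ℕ) + ν by push_cast; ring, hcoeff] at h
  exact h

noncomputable def ladderPi (l c : ℝ) : ℕ → ℝ
  | 0 => 1 - c * JhatL l 0
  | n + 1 => c * (JhatL l n - JhatL l (n + 1))

lemma sum_range_succ_ladderPi (l c : ℝ) (n : ℕ) :
    ∑ k ∈ range (n + 1), ladderPi l c k = 1 - c * JhatL l n := by
  induction n with
  | zero => simp [ladderPi]
  | succ n ih => rw [sum_range_succ, ih, ladderPi]; ring

lemma summable_ladderPi {l : ℝ} (hl : 0 < l) (c : ℝ) : Summable (ladderPi l c) :=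
  (summable_nat_add_iff 1).1 <|
    (((summable_JhatL hl).sub ((summable_nat_add_iff 1).2 (summable_JhatL hl))).mul_left c)

lemma hasSum_ladderPi {l : ℝ} (hl : 0 < l) (c : ℝ) : HasSum (ladderPi l c) 1 := by
  rw [(summable_ladderPi hl c).hasSum_iff_tendsto_nat, ← Filter.tendsto_add_atTop_iff_nat 1]
  simp only [sum_range_succ_ladderPi]
  simpa using ((summable_JhatL hl).tendsto_atTop_zero.const_mul c).const_sub 1

lemma hasSum_ladderPi_nat_add {l : ℝ} (hl : 0 < l) (c : ℝ) (n : ℕ) :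
    HasSum (fun i => ladderPi l c (i + (n + 1))) (c * JhatL l n) := by
  simpa [sum_range_succ_ladderPi] using (hasSum_nat_add_iff' (n + 1)).2 (hasSum_ladderPi hl c)

lemma ladderQ_eq_of_add_two_le (l : ℝ) {i j : ℕ} (h : j + 2 ≤ i) : ladderQ l i j = l := by
  rw [ladderQ, if_neg (by omega), if_pos h]

lemma ladderQ_eq_zero_of_add_two_le (l : ℝ) {i j : ℕ} (h : i + 2 ≤ j) : ladderQ l i j = 0 := by
  unfold ladderQ
  split_ifs <;> first | rfl | omega

lemma abs_ladderQ_le (l : ℝ) (i j : ℕ) : |ladderQ l i j| ≤ 2 + (j + 1) * |l| := by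
  unfold ladderQ
  split_ifs <;> (try subst i) <;> rw [abs_le] <;> constructor <;>
    nlinarith [le_abs_self l, neg_abs_le l,
      mul_le_mul_of_nonneg_left (le_abs_self l) (Nat.cast_nonneg (α := ℝ) j),
      mul_le_mul_of_nonneg_left (neg_abs_le l) (Nat.cast_nonneg (α := ℝ) j)]

lemma summable_abs_mul_ladderQ {p : ℕ → ℝ} (hp : Summable p) (l : ℝ) (j : ℕ) :
    Summable fun i => |p i * ladderQ l i j| :=
  .of_nonneg_of_le (fun _ => abs_nonneg _)
    (fun i => by
      rw [abs_mul]
      exact mul_le_mul_of_nonneg_left (abs_ladderQ_le l i j) (abs_nonneg _))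
    (hp.abs.mul_right _)

lemma sum_range_ladderPi_mul_ladderQ_add_eq_zero {l c : ℝ} (hl : 0 < l)
    (hc : c * ((2 * l ^ 2 + 8 * l + 5) * JhatL l 1 - (l + 3) * JhatL l 2) = 2) (j : ℕ) :
    ∑ i ∈ range (j + 2), ladderPi l c i * ladderQ l i j + l * (c * JhatL l (j + 1)) = 0 := by
  rcases j with _ | _ | k
  · simp only [zero_add, ladderPi, ladderQ, ↓reduceIte, neg_add_rev, Nat.right_eq_add,
      Nat.add_eq_zero_iff, one_ne_zero, and_false, mul_ite, mul_neg, mul_zero, sum_range_succ,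
      range_one, sum_singleton, Nat.not_ofNat_le_one]
    linear_combination hc + c * (3 + l) * JhatL_add_JhatL_add_two hl 0
  · simp only [zero_add, Nat.reduceAdd, ladderPi, ladderQ, one_ne_zero, ↓reduceIte, neg_add_rev,
      Nat.right_eq_add, mul_ite, mul_one, mul_zero, sum_range_succ, range_one, sum_singleton,
      Nat.not_ofNat_le_one, OfNat.ofNat_ne_one, Nat.cast_one, one_mul, OfNat.ofNat_ne_zero,
      Nat.reduceLeDiff]
    linear_combination (-1 : ℝ) * hc - c * (4 + l) * JhatL_add_JhatL_add_two hl 0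
  · rw [sum_range_succ, sum_range_succ, sum_range_succ, sum_eq_zero fun i hi => by
      rw [ladderQ_eq_zero_of_add_two_le l (by simp at hi; omega), mul_zero]]
    simp only [ladderPi, ladderQ, Nat.add_eq_zero_iff, one_ne_zero, and_false, ↓reduceIte,
      Nat.reduceLeDiff, add_le_iff_nonpos_right, nonpos_iff_eq_zero, OfNat.ofNat_ne_zero,
      Nat.add_right_cancel_iff, show k + 1 + 1 ≠ k by omega, Nat.add_eq_left, mul_one, zero_add, Nat.cast_add, Nat.cast_ofNat, neg_add_rev,
      add_le_add_iff_right]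
    linear_combination (norm := (push_cast; ring))
      c * JhatL_add_JhatL_add_two hl k - c * JhatL_add_JhatL_add_two hl (k + 1)

lemma hasSum_ladderPi_mul_ladderQ {l c : ℝ} (hl : 0 < l)
    (hc : c * ((2 * l ^ 2 + 8 * l + 5) * JhatL l 1 - (l + 3) * JhatL l 2) = 2) (j : ℕ) :
    HasSum (fun i => ladderPi l c i * ladderQ l i j) 0 := by
  have htail : HasSum (fun i => ladderPi l c (i + (j + 2)) * ladderQ l (i + (j + 2)) j)
      (l * (c * JhatL l (j + 1))) := by
    simp only [ladderQ_eq_of_add_two_le l (Nat.le_add_left _ _), mul_comm _ l]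
    exact (hasSum_ladderPi_nat_add hl c (j + 1)).mul_left l
  rw [← hasSum_nat_add_iff' (j + 2), zero_sub,
    ← eq_neg_of_add_eq_zero_right (sum_range_ladderPi_mul_ladderQ_add_eq_zero hl hc j)]
  exact htail

/-- With `λ > 0`, `D = (2λ²+8λ+5)Ĵ₁ − (λ+3)Ĵ₂ ≠ 0` and `c = 2/D`,
the vector `π₀ = 1 − cĴ₀`, `π_n = c(Ĵ_{n−1} − Ĵ_n)` for `n ≥ 1` satisfies:
(i) `∑_{k=0}^n π_k = 1 − cĴ_n`; (ii) `π` is summable with total mass `1`;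
(iii) every column series `∑ π_i Q(i,j)` converges absolutely to `0`. -/
theorem stmt_8 (l : ℝ) (hl : 0 < l)
    (hD : (2 * l ^ 2 + 8 * l + 5) * JhatL l 1 - (l + 3) * JhatL l 2 ≠ 0)
    (c : ℝ) (hc : c = 2 / ((2 * l ^ 2 + 8 * l + 5) * JhatL l 1 - (l + 3) * JhatL l 2))
    (π : ℕ → ℝ) (hπ0 : π 0 = 1 - c * JhatL l 0)
    (hπ : ∀ n : ℕ, 1 ≤ n → π n = c * (JhatL l (n - 1) - JhatL l n)) :
    (∀ n : ℕ, ∑ k ∈ Finset.range (n + 1), π k = 1 - c * JhatL l n) ∧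
    (Summable π ∧ ∑' k, π k = 1) ∧
    (∀ j : ℕ, Summable (fun i => |π i * ladderQ l i j|) ∧
      ∑' i, π i * ladderQ l i j = 0) := by
  obtain rfl : π = ladderPi l c := funext fun
    | 0 => hπ0
    | n + 1 => hπ (n + 1) n.succ_pos
  have hcD : c * ((2 * l ^ 2 + 8 * l + 5) * JhatL l 1 - (l + 3) * JhatL l 2) = 2 := by
    rw [hc, div_mul_cancel₀ _ hD]
  exact ⟨sum_range_succ_ladderPi l c, ⟨summable_ladderPi hl c, (hasSum_ladderPi hl c).tsum_eq⟩,
    fun j => ⟨summable_abs_mul_ladderQ (summable_ladderPi hl c) l j,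
      (hasSum_ladderPi_mul_ladderQ hl hcD j).tsum_eq⟩⟩
end

section
/- The double series identity ∑_{j=0}^∞ (−1)^j·(j + 3/2)·∑_{m=0}^∞ (−1)^m·(1/2)^m/(m!·(m+j)!) = (J_0(√2) − √2·J_1(√2))/2 holds, where the inner series equals (√2)^j·J_j(√2) and the outer series converges absolutely. -/
open Filter Topology

theorem hasSum_sub_succ_of_tendsto {G : Type*} [AddCommGroup G] [TopologicalSpace G]
    [IsTopologicalAddGroup G] [T2Space G] {f : ℕ → G} {l : G}
    (hs : Summable fun n => f n - f (n + 1)) (hf : Tendsto f atTop (𝓝 l)) :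
    HasSum (fun n => f n - f (n + 1)) (f 0 - l) := by
  have hpartial : Tendsto (fun n => ∑ i ∈ Finset.range n, (f i - f (i + 1))) atTop
      (𝓝 (f 0 - l)) := by
    simpa only [Finset.sum_range_sub'] using hf.const_sub (f 0)
  rw [tendsto_nhds_unique hpartial hs.hasSum.tendsto_sum_nat]
  exact hs.hasSum

section BesselSeries

noncomputable def besselTerm (x : ℝ) (j m : ℕ) : ℝ :=
  (-1 : ℝ) ^ m * x ^ m / ((m.factorial : ℝ) * ((m + j).factorial : ℝ))

noncomputable def besselSeries (x : ℝ) (j : ℕ) : ℝ := ∑' m : ℕ, besselTerm x j m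

variable (x : ℝ)

theorem norm_besselTerm_le (j m : ℕ) :
    ‖besselTerm x j m‖ ≤ |x| ^ m / m.factorial / j.factorial := by
  have hj : (0 : ℝ) < j.factorial := by exact_mod_cast j.factorial_pos
  have hm : (0 : ℝ) < m.factorial := by exact_mod_cast m.factorial_pos
  have hjm : (j.factorial : ℝ) ≤ (m + j).factorial := by
    exact_mod_cast Nat.factorial_le (Nat.le_add_left j m)
  simp only [besselTerm, norm_div, norm_mul, norm_pow, norm_neg, norm_one, one_pow, one_mul,
    Real.norm_eq_abs, Nat.abs_cast, div_div]
  gcongr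

theorem summable_besselTerm (j : ℕ) : Summable (besselTerm x j) :=
  .of_norm_bounded ((Real.summable_pow_div_factorial |x|).div_const _) (norm_besselTerm_le x j)

theorem abs_besselSeries_le (j : ℕ) : |besselSeries x j| ≤ Real.exp |x| / j.factorial := by
  have hexp : HasSum (fun m : ℕ => |x| ^ m / m.factorial / j.factorial)
      (Real.exp |x| / j.factorial) := by
    rw [Real.exp_eq_exp_ℝ]
    exact (NormedSpace.expSeries_div_hasSum_exp |x|).div_const _
  exact (norm_tsum_le_tsum_norm (summable_besselTerm x j).norm).trans
    (hasSum_le (norm_besselTerm_le x j) (summable_besselTerm x j).norm.hasSum hexp)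

theorem summable_affine_mul_besselSeries (a b : ℝ) :
    Summable fun j : ℕ => (a * j + b) * besselSeries x j := by
  refine .of_norm_bounded
    (((Real.summable_pow_div_factorial 2).mul_left ((|a| + |b|) * Real.exp |x|))) fun j => ?_
  have hj : (0 : ℝ) < j.factorial := by exact_mod_cast j.factorial_pos
  have hj2 : (j : ℝ) ≤ 2 ^ j := by exact_mod_cast Nat.lt_two_pow_self.le
  have h12 : (1 : ℝ) ≤ 2 ^ j := one_le_pow₀ (by norm_num)
  have haffine : |a * j + b| ≤ (|a| + |b|) * 2 ^ j := by
    calc |a * j + b| ≤ |a| * j + |b| := by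
          simpa [abs_mul] using abs_add_le (a * j) b
      _ ≤ (|a| + |b|) * 2 ^ j := by
          nlinarith [abs_nonneg a, abs_nonneg b]
  rw [Real.norm_eq_abs, abs_mul]
  calc |a * j + b| * |besselSeries x j|
        ≤ ((|a| + |b|) * 2 ^ j) * (Real.exp |x| / j.factorial) :=
        mul_le_mul haffine (abs_besselSeries_le x j) (abs_nonneg _) (by positivity)
    _ = (|a| + |b|) * Real.exp |x| * (2 ^ j / j.factorial) := by ring

theorem besselSeries_recurrence (j : ℕ) :
    x * besselSeries x (j + 2) = (j + 1) * besselSeries x (j + 1) - besselSeries x j := by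
  have hs : Summable fun m => (j + 1) * besselTerm x (j + 1) m - besselTerm x j m :=
    ((summable_besselTerm x (j + 1)).mul_left _).sub (summable_besselTerm x j)
  have hzero : (j + 1) * besselTerm x (j + 1) 0 - besselTerm x j 0 = 0 := by
    have hj : (j.factorial : ℝ) ≠ 0 := by exact_mod_cast j.factorial_ne_zero
    simp only [besselTerm, pow_zero, Nat.factorial_zero, zero_add, Nat.factorial_succ]
    push_cast
    field_simp
    ring
  have hsucc (m : ℕ) : (j + 1) * besselTerm x (j + 1) (m + 1) - besselTerm x j (m + 1) =
      x * besselTerm x (j + 2) m := by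
    have hm : (m.factorial : ℝ) ≠ 0 := by exact_mod_cast m.factorial_ne_zero
    have hmj : ((m + j).factorial : ℝ) ≠ 0 := by exact_mod_cast (m + j).factorial_ne_zero
    simp only [besselTerm, show m + 1 + (j + 1) = m + j + 1 + 1 by ring,
      show m + 1 + j = m + j + 1 by ring, show m + (j + 2) = m + j + 1 + 1 by ring,
      Nat.factorial_succ]
    push_cast
    field_simp
    ring
  rw [besselSeries, besselSeries, besselSeries, ← tsum_mul_left, ← tsum_mul_left,
    ← Summable.tsum_sub ((summable_besselTerm x (j + 1)).mul_left _) (summable_besselTerm x j),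
    hs.tsum_eq_zero_add, hzero, zero_add]
  exact (tsum_congr hsucc).symm

noncomputable def besselTelescope (j : ℕ) : ℝ :=
  (-1) ^ j * ((j + x) * besselSeries x j - x * besselSeries x (j + 1))

theorem besselTelescope_sub_succ (j : ℕ) :
    besselTelescope x j - besselTelescope x (j + 1) =
      (-1) ^ j * (j + 1 + x) * besselSeries x j := by
  have hrec := besselSeries_recurrence x j
  rw [besselTelescope, besselTelescope, pow_succ, show j + 1 + 1 = j + 2 from rfl]
  push_cast
  linear_combination -(-1 : ℝ) ^ j * hrec

theorem summable_besselSeries : Summable (besselSeries x) := by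
  simpa using summable_affine_mul_besselSeries x 0 1

theorem tendsto_besselTelescope : Tendsto (besselTelescope x) atTop (𝓝 0) := by
  have hshift : Summable fun j : ℕ => x * besselSeries x (j + 1) :=
    ((summable_nat_add_iff 1).mpr (summable_besselSeries x)).mul_left x
  have hs : Summable fun j : ℕ => (1 * j + x) * besselSeries x j - x * besselSeries x (j + 1) :=
    (summable_affine_mul_besselSeries x 1 x).sub hshift
  refine squeeze_zero_norm (fun j => le_of_eq ?_) hs.norm.tendsto_atTop_zero
  simp [besselTelescope, norm_mul]

theorem hasSum_alternating_besselSeries :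
    HasSum (fun j : ℕ => (-1) ^ j * (j + 1 + x) * besselSeries x j)
      (x * (besselSeries x 0 - besselSeries x 1)) := by
  have hs : Summable fun j : ℕ => (-1) ^ j * (j + 1 + x) * besselSeries x j := by
    refine Summable.of_norm ?_
    simpa [mul_assoc, norm_mul, add_assoc] using
      (summable_affine_mul_besselSeries x 1 (1 + x)).norm
  simp_rw [← besselTelescope_sub_succ] at hs ⊢
  have hP0 : besselTelescope x 0 - 0 = x * (besselSeries x 0 - besselSeries x 1) := by
    simp only [besselTelescope, pow_zero, Nat.cast_zero, zero_add, one_mul, sub_zero]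
    ring
  simpa only [hP0] using hasSum_sub_succ_of_tendsto hs (tendsto_besselTelescope x)

theorem besselJ_natCast_eq (j : ℕ) (z : ℝ) :
    besselJ j z = (z / 2) ^ j * besselSeries (z ^ 2 / 4) j := by
  rw [besselJ, besselSeries, ← tsum_mul_left]
  refine tsum_congr fun m => ?_
  rw [show (m : ℝ) + j + 1 = ((m + j : ℕ) : ℝ) + 1 by push_cast; ring,
    Real.Gamma_nat_eq_factorial,
    show 2 * (m : ℝ) + j = ((2 * m + j : ℕ) : ℝ) by push_cast; ring, Real.rpow_natCast,
    besselTerm, pow_add, pow_mul]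
  ring

end BesselSeries

/-- The inner series `∑_m (−1)^m (1/2)^m/(m!(m+j)!)` equals
`(√2)^j J_j(√2)`, the outer series converges absolutely, and
`∑_j (−1)^j (j+3/2) ∑_m (−1)^m (1/2)^m/(m!(m+j)!) = (J₀(√2) − √2 J₁(√2))/2`. -/
theorem stmt_16 :
    (∀ j : ℕ,
      ∑' m : ℕ, ((-1 : ℝ) ^ m * (1 / 2 : ℝ) ^ m /
          ((m.factorial : ℝ) * ((m + j).factorial : ℝ))) =
        (Real.sqrt 2) ^ j * besselJ (j : ℝ) (Real.sqrt 2)) ∧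
    Summable (fun j : ℕ =>
      |(-1 : ℝ) ^ j * ((j : ℝ) + 3 / 2) *
        ∑' m : ℕ, ((-1 : ℝ) ^ m * (1 / 2 : ℝ) ^ m /
          ((m.factorial : ℝ) * ((m + j).factorial : ℝ)))|) ∧
    ∑' j : ℕ, ((-1 : ℝ) ^ j * ((j : ℝ) + 3 / 2) *
        ∑' m : ℕ, ((-1 : ℝ) ^ m * (1 / 2 : ℝ) ^ m /
          ((m.factorial : ℝ) * ((m + j).factorial : ℝ)))) =
      (besselJ 0 (Real.sqrt 2) - Real.sqrt 2 * besselJ 1 (Real.sqrt 2)) / 2 := by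
  have hsqrt : Real.sqrt 2 ^ 2 = 2 := Real.sq_sqrt (by norm_num)
  have hseries (j : ℕ) : besselSeries (1 / 2) j = Real.sqrt 2 ^ j * besselJ j (Real.sqrt 2) := by
    rw [besselJ_natCast_eq, ← mul_assoc, ← mul_pow, hsqrt,
      show Real.sqrt 2 * (Real.sqrt 2 / 2) = 1 by rw [mul_div_assoc', ← sq, hsqrt]; norm_num]
    norm_num
  have hsum : HasSum (fun j : ℕ => (-1) ^ j * ((j : ℝ) + 3 / 2) * besselSeries (1 / 2) j)
      ((besselJ 0 (Real.sqrt 2) - Real.sqrt 2 * besselJ 1 (Real.sqrt 2)) / 2) := by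
    convert hasSum_alternating_besselSeries (1 / 2) using 1
    · norm_num [add_assoc]
    · rw [hseries 0, hseries 1]
      norm_num
      ring
  exact ⟨hseries, hsum.summable.abs, hsum.tsum_eq⟩
end
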